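/- (Phase velocity in energy-momentum space exceeds unity, second half of (5n).) Let c > 0 and let v1, v2 be real with 0 < v1 < c and 0 < v2 < c. Write γ1 = 1/√(1 − v1²/c²) and γ2 = 1/√(1 − v2²/c²). Then v2·γ2 + v1·γ1 > c·|γ2 − γ1|; equivalently, for a particle-antiparticle pair of common mass m > 0 moving apart with speeds v1 and v2, the momentum difference and energy difference satisfy c·|ΔP| > |ΔE| where ΔP = m·v2·γ2 + m·v1·γ1 and ΔE = m·c²·(γ2 − γ1). -/

import Mathlib

/-!
With `β = v / c`, one has `(1 - β) γ = √((1 - β) / (1 + β)) < 1`, i.e. `c (γ - 1) < v γ`.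
Since every Lorentz factor is at least `1`, this gives `c (γ₂ - γ₁) < v₂ γ₂` and symmetrically,
whence `c |γ₂ - γ₁| < v₂ γ₂ + v₁ γ₁`; the momentum–energy form is this inequality times `m c`.
-/

open Real

noncomputable def lorentzFactor (c v : ℝ) : ℝ := 1 / √(1 - v ^ 2 / c ^ 2)

section LorentzFactor

variable {c v : ℝ}

lemma one_sub_sq_div_sq_pos (hv : |v| < c) : 0 < 1 - v ^ 2 / c ^ 2 := by
  have hc : 0 < c := (abs_nonneg v).trans_lt hv
  rw [sub_pos, div_lt_one (by positivity)]
  exact sq_lt_sq' (neg_lt_of_abs_lt hv) (lt_of_abs_lt hv)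

lemma one_le_lorentzFactor (hv : |v| < c) : 1 ≤ lorentzFactor c v := by
  have hs : 0 < √(1 - v ^ 2 / c ^ 2) := sqrt_pos.2 (one_sub_sq_div_sq_pos hv)
  rw [lorentzFactor, le_div_iff₀ hs, one_mul, sqrt_le_one]
  have : 0 ≤ v ^ 2 / c ^ 2 := by positivity
  linarith

lemma sub_mul_lorentzFactor_lt (hv0 : 0 < v) (hvc : v < c) :
    (c - v) * lorentzFactor c v < c := by
  have hc : 0 < c := hv0.trans hvc
  have hv : |v| < c := by rwa [abs_of_pos hv0]
  have hx := one_sub_sq_div_sq_pos hv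
  have hs : 0 < √(1 - v ^ 2 / c ^ 2) := sqrt_pos.2 hx
  have hcs : (c * √(1 - v ^ 2 / c ^ 2)) ^ 2 = c ^ 2 - v ^ 2 := by
    rw [mul_pow, sq_sqrt hx.le]
    field_simp
  have hlt : c - v < c * √(1 - v ^ 2 / c ^ 2) := by
    refine lt_of_pow_lt_pow_left₀ 2 (by positivity) ?_
    rw [hcs]
    nlinarith
  rw [lorentzFactor, mul_one_div, div_lt_iff₀ hs]
  exact hlt

lemma mul_sub_lt_mul_lorentzFactor {γ' : ℝ} (hv0 : 0 < v) (hvc : v < c) (hγ' : 1 ≤ γ') :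
    c * (lorentzFactor c v - γ') < v * lorentzFactor c v := by
  have := sub_mul_lorentzFactor_lt hv0 hvc
  nlinarith

end LorentzFactor

lemma mul_abs_sub_lorentzFactor_lt {c v₁ v₂ : ℝ} (h₁ : 0 < v₁) (h₁c : v₁ < c)
    (h₂ : 0 < v₂) (h₂c : v₂ < c) :
    c * |lorentzFactor c v₂ - lorentzFactor c v₁| <
      v₂ * lorentzFactor c v₂ + v₁ * lorentzFactor c v₁ := by
  have hγ₁ := one_le_lorentzFactor (c := c) (v := v₁) (by rwa [abs_of_pos h₁])
  have hγ₂ := one_le_lorentzFactor (c := c) (v := v₂) (by rwa [abs_of_pos h₂])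
  have hc : 0 ≤ c := h₁.le.trans h₁c.le
  have hk₁ := mul_sub_lt_mul_lorentzFactor h₁ h₁c hγ₂
  have hk₂ := mul_sub_lt_mul_lorentzFactor h₂ h₂c hγ₁
  have hp₁ : 0 < v₁ * lorentzFactor c v₁ := by positivity
  have hp₂ : 0 < v₂ * lorentzFactor c v₂ := by positivity
  have h : |c * (lorentzFactor c v₂ - lorentzFactor c v₁)| <
      v₂ * lorentzFactor c v₂ + v₁ * lorentzFactor c v₁ :=
    abs_lt.2 ⟨by linarith, by linarith⟩
  rwa [abs_mul, abs_of_nonneg hc] at h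

/-- Second half of (5n): for `0 < v1 < c`, `0 < v2 < c`, with
`γᵢ = 1/√(1 − vᵢ²/c²)`, one has `v2·γ2 + v1·γ1 > c·|γ2 − γ1|`; equivalently,
for any common mass `m > 0`, `c·|ΔP| > |ΔE|` where `ΔP = m·v2·γ2 + m·v1·γ1`
and `ΔE = m·c²·(γ2 − γ1)`. -/
theorem phase_velocity_energy_momentum_exceeds_unity (c v1 v2 : ℝ) (hc : 0 < c)
    (h1l : 0 < v1) (h1u : v1 < c) (h2l : 0 < v2) (h2u : v2 < c)
    (γ1 γ2 : ℝ)
    (hγ1 : γ1 = 1 / Real.sqrt (1 - v1 ^ 2 / c ^ 2))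
    (hγ2 : γ2 = 1 / Real.sqrt (1 - v2 ^ 2 / c ^ 2)) :
    v2 * γ2 + v1 * γ1 > c * |γ2 - γ1|
      ∧ ∀ m : ℝ, 0 < m →
          c * |m * v2 * γ2 + m * v1 * γ1| > |m * c ^ 2 * (γ2 - γ1)| := by
  have hP : c * |γ2 - γ1| < v2 * γ2 + v1 * γ1 := by
    subst hγ1 hγ2
    exact mul_abs_sub_lorentzFactor_lt h1l h1u h2l h2u
  refine ⟨hP, fun m hm => ?_⟩
  have hmc : 0 < m * c := mul_pos hm hc
  have hS : 0 < v2 * γ2 + v1 * γ1 := (by positivity : 0 ≤ c * |γ2 - γ1|).trans_lt hP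
  calc |m * c ^ 2 * (γ2 - γ1)| = m * c * (c * |γ2 - γ1|) := by
        rw [abs_mul, abs_of_pos (by positivity : 0 < m * c ^ 2)]; ring
    _ < m * c * (v2 * γ2 + v1 * γ1) := mul_lt_mul_of_pos_left hP hmc
    _ = c * |m * v2 * γ2 + m * v1 * γ1| := by
        rw [mul_assoc m v2, mul_assoc m v1, ← mul_add, abs_of_pos (mul_pos hm hS)]; ring
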